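/- arXiv:1301.7174 — 8 statements merged into one kernel-verified Lean document; each statement's English description precedes it below -/
import Mathlib

section
/- Let p, q, r be pairwise coprime integers greater than 1, and for coprime a, b let a⁻¹(b) denote the inverse of a modulo b taken in {1,...,b-1}. Then exactly one or exactly two of the three inequalities q⁻¹(p) + r⁻¹(p) > p, r⁻¹(q) + p⁻¹(q) > q, p⁻¹(r) + q⁻¹(r) > r hold (i.e., the number of these inequalities that hold is 1 or 2). -/
/-!
If `a = q⁻¹(p)` and `b = p⁻¹(q)`, then `q a + p b ≡ 1 (mod pq)` and `1 < q a + p b < 2pq`,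
so `q a + p b = pq + 1`. Multiplying the three identities of this kind by `r`, `q`, `p`
and adding gives
`qr (q⁻¹(p) + r⁻¹(p)) + pr (r⁻¹(q) + p⁻¹(q)) + pq (p⁻¹(r) + q⁻¹(r)) = 3pqr + p + q + r`.
If all three sums exceeded their moduli, the left side would be at least `3pqr + qr + pr + pq`,
which is too large; if none did, it would be at most `3pqr`, which is too small.
-/

theorem mul_add_mul_eq_mul_add_one_of_modEq {p q a b : ℕ} (hpq : Nat.Coprime p q)
    (ha : 0 < a) (hap : a < p) (hqa : q * a ≡ 1 [MOD p])
    (hb : 0 < b) (hbq : b < q) (hpb : p * b ≡ 1 [MOD q]) :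
    q * a + p * b = p * q + 1 := by
  have hmodp : q * a + p * b ≡ 1 [MOD p] := by
    simpa using hqa.add (Nat.modEq_zero_iff_dvd.mpr (dvd_mul_right p b))
  have hmodq : q * a + p * b ≡ 1 [MOD q] := by
    simpa using (Nat.modEq_zero_iff_dvd.mpr (dvd_mul_right q a)).add hpb
  have hlower : p + q ≤ q * a + p * b := by nlinarith
  obtain ⟨k, hk⟩ : p * q ∣ q * a + p * b - 1 :=
    (Nat.modEq_iff_dvd' (by omega)).mp
      ((Nat.modEq_and_modEq_iff_modEq_mul hpq).mp ⟨hmodp, hmodq⟩).symm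
  have hupper : q * a + p * b < 2 * (p * q) := by nlinarith
  have hk_pos : 0 < k := Nat.pos_of_ne_zero (by rintro rfl; omega)
  have hk_lt : k < 2 := Nat.lt_of_mul_lt_mul_left (a := p * q) (by omega)
  obtain rfl : k = 1 := by omega
  omega

theorem lt_or_lt_or_lt_of_weighted_sum_eq {p q r x y z : ℕ} (hpqr : 0 < p + q + r)
    (h : q * r * x + p * r * y + p * q * z = 3 * (p * q * r) + (p + q + r)) :
    p < x ∨ q < y ∨ r < z := by
  by_contra! hle
  obtain ⟨hx, hy, hz⟩ := hle
  have : q * r * x + p * r * y + p * q * z ≤ q * r * p + p * r * q + p * q * r := by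
    gcongr
  nlinarith

theorem le_or_le_or_le_of_weighted_sum_eq {p q r x y z : ℕ} (hp : 1 < p) (hq : 1 < q) (hr : 1 < r)
    (h : q * r * x + p * r * y + p * q * z = 3 * (p * q * r) + (p + q + r)) :
    x ≤ p ∨ y ≤ q ∨ z ≤ r := by
  by_contra! hlt
  obtain ⟨hx, hy, hz⟩ := hlt
  have : q * r * (p + 1) + p * r * (q + 1) + p * q * (r + 1) ≤
      q * r * x + p * r * y + p * q * z := by
    gcongr <;> omega
  nlinarith

/-- For pairwise coprime `p, q, r > 1`, with all six modular inverses taken in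
`{1,...,modulus-1}`, exactly one or exactly two of the three inequalities
`q⁻¹(p)+r⁻¹(p) > p`, `r⁻¹(q)+p⁻¹(q) > q`, `p⁻¹(r)+q⁻¹(r) > r` hold. -/
theorem stmt1 (p q r : ℕ) (hp : 1 < p) (hq : 1 < q) (hr : 1 < r)
    (hpq : Nat.Coprime p q) (hqr : Nat.Coprime q r) (hrp : Nat.Coprime r p)
    (iqp irp irq ipq ipr iqr : ℕ)
    (hiqp : 1 ≤ iqp ∧ iqp ≤ p - 1 ∧ q * iqp ≡ 1 [MOD p])
    (hirp : 1 ≤ irp ∧ irp ≤ p - 1 ∧ r * irp ≡ 1 [MOD p])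
    (hirq : 1 ≤ irq ∧ irq ≤ q - 1 ∧ r * irq ≡ 1 [MOD q])
    (hipq : 1 ≤ ipq ∧ ipq ≤ q - 1 ∧ p * ipq ≡ 1 [MOD q])
    (hipr : 1 ≤ ipr ∧ ipr ≤ r - 1 ∧ p * ipr ≡ 1 [MOD r])
    (hiqr : 1 ≤ iqr ∧ iqr ≤ r - 1 ∧ q * iqr ≡ 1 [MOD r]) :
    (if iqp + irp > p then 1 else 0) + (if irq + ipq > q then 1 else 0)
      + (if ipr + iqr > r then 1 else 0) = 1 ∨
    (if iqp + irp > p then 1 else 0) + (if irq + ipq > q then 1 else 0)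
      + (if ipr + iqr > r then 1 else 0) = 2 := by
  obtain ⟨hiqp₁, hiqp₂, hiqp₃⟩ := hiqp
  obtain ⟨hirp₁, hirp₂, hirp₃⟩ := hirp
  obtain ⟨hirq₁, hirq₂, hirq₃⟩ := hirq
  obtain ⟨hipq₁, hipq₂, hipq₃⟩ := hipq
  obtain ⟨hipr₁, hipr₂, hipr₃⟩ := hipr
  obtain ⟨hiqr₁, hiqr₂, hiqr₃⟩ := hiqr
  have hpq' : q * iqp + p * ipq = p * q + 1 :=
    mul_add_mul_eq_mul_add_one_of_modEq hpq hiqp₁ (by omega) hiqp₃ hipq₁ (by omega) hipq₃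
  have hpr' : r * irp + p * ipr = p * r + 1 :=
    mul_add_mul_eq_mul_add_one_of_modEq hrp.symm hirp₁ (by omega) hirp₃ hipr₁ (by omega) hipr₃
  have hqr' : r * irq + q * iqr = q * r + 1 :=
    mul_add_mul_eq_mul_add_one_of_modEq hqr hirq₁ (by omega) hirq₃ hiqr₁ (by omega) hiqr₃
  have hsum : q * r * (iqp + irp) + p * r * (irq + ipq) + p * q * (ipr + iqr) =
      3 * (p * q * r) + (p + q + r) := by
    linear_combination r * hpq' + q * hpr' + p * hqr'
  have hsome := lt_or_lt_or_lt_of_weighted_sum_eq (by omega) hsum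
  have hnotall := le_or_le_or_le_of_weighted_sum_eq hp hq hr hsum
  split_ifs <;> omega
end

section
/- Let p, q, r be pairwise coprime integers greater than 1 with inverses as above. Then (q⁻¹(p) + r⁻¹(p))/p + (r⁻¹(q) + p⁻¹(q))/q + (p⁻¹(r) + q⁻¹(r))/r = 3 + 1/(qr) + 1/(rp) + 1/(pq). -/
/-!
If `x = a⁻¹ mod b` and `y = b⁻¹ mod a` are the least positive inverses, then `a x + b y ≡ 1`
modulo both `a` and `b`, hence modulo `a b`; since `0 < x < b` and `0 < y < a` force
`a + b ≤ a x + b y ≤ 2 a b - a - b`, this gives `a x + b y = a b + 1`, i.e.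
`x / b + y / a = 1 + 1 / (a b)`. The theorem is the sum of these identities for the three
pairs among `p, q, r`.
-/

theorem Nat.mul_add_mul_eq_mul_add_one_of_modEq {a b x y : ℕ} (hab : a.Coprime b)
    (hx₀ : 0 < x) (hxb : x < b) (hx : a * x ≡ 1 [MOD b])
    (hy₀ : 0 < y) (hya : y < a) (hy : b * y ≡ 1 [MOD a]) :
    a * x + b * y = a * b + 1 := by
  have hmod_a : a * x + b * y ≡ 1 [MOD a] := by
    simpa using (Nat.modEq_zero_iff_dvd.mpr (dvd_mul_right a x)).add hy
  have hmod_b : a * x + b * y ≡ 1 [MOD b] := by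
    simpa using hx.add (Nat.modEq_zero_iff_dvd.mpr (dvd_mul_right b y))
  have hmod : a * x + b * y ≡ a * b + 1 [MOD a * b] :=
    ((Nat.modEq_and_modEq_iff_modEq_mul hab).mp ⟨hmod_a, hmod_b⟩).trans
      (by simp [Nat.ModEq])
  refine hmod.eq_of_abs_lt (abs_sub_lt_iff.mpr ⟨?_, ?_⟩) <;> push_cast <;>
    nlinarith [Nat.mul_le_mul_left a hxb, Nat.mul_le_mul_left b hya]

theorem Nat.cast_div_add_cast_div_eq_one_add_inv_mul {a b x y : ℕ} (hab : a.Coprime b)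
    (hx₀ : 0 < x) (hxb : x < b) (hx : a * x ≡ 1 [MOD b])
    (hy₀ : 0 < y) (hya : y < a) (hy : b * y ≡ 1 [MOD a]) :
    (x : ℚ) / b + y / a = 1 + 1 / (a * b) := by
  have key : ((a * x + b * y : ℕ) : ℚ) = (a * b + 1 : ℕ) := by
    rw [Nat.mul_add_mul_eq_mul_add_one_of_modEq hab hx₀ hxb hx hy₀ hya hy]
  push_cast at key
  have ha : (a : ℚ) ≠ 0 := by exact_mod_cast (hy₀.trans hya).ne'
  have hb : (b : ℚ) ≠ 0 := by exact_mod_cast (hx₀.trans hxb).ne'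
  field_simp
  linear_combination key

theorem stmt2_general (p q r : ℕ)
    (hpq : Nat.Coprime p q) (hqr : Nat.Coprime q r) (hrp : Nat.Coprime r p)
    (iqp irp irq ipq ipr iqr : ℕ)
    (hiqp : 1 ≤ iqp ∧ iqp ≤ p - 1 ∧ q * iqp ≡ 1 [MOD p])
    (hirp : 1 ≤ irp ∧ irp ≤ p - 1 ∧ r * irp ≡ 1 [MOD p])
    (hirq : 1 ≤ irq ∧ irq ≤ q - 1 ∧ r * irq ≡ 1 [MOD q])
    (hipq : 1 ≤ ipq ∧ ipq ≤ q - 1 ∧ p * ipq ≡ 1 [MOD q])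
    (hipr : 1 ≤ ipr ∧ ipr ≤ r - 1 ∧ p * ipr ≡ 1 [MOD r])
    (hiqr : 1 ≤ iqr ∧ iqr ≤ r - 1 ∧ q * iqr ≡ 1 [MOD r]) :
    ((iqp : ℚ) + irp) / p + ((irq : ℚ) + ipq) / q + ((ipr : ℚ) + iqr) / r
      = 3 + 1 / (q * r) + 1 / (r * p) + 1 / (p * q) := by
  obtain ⟨hiqp₀, hiqp₁, hiqp⟩ := hiqp
  obtain ⟨hirp₀, hirp₁, hirp⟩ := hirp
  obtain ⟨hirq₀, hirq₁, hirq⟩ := hirq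
  obtain ⟨hipq₀, hipq₁, hipq⟩ := hipq
  obtain ⟨hipr₀, hipr₁, hipr⟩ := hipr
  obtain ⟨hiqr₀, hiqr₁, hiqr⟩ := hiqr
  have hpq' := Nat.cast_div_add_cast_div_eq_one_add_inv_mul hpq
    (by omega) (by omega) hipq (by omega) (by omega) hiqp
  have hqr' := Nat.cast_div_add_cast_div_eq_one_add_inv_mul hqr
    (by omega) (by omega) hiqr (by omega) (by omega) hirq
  have hrp' := Nat.cast_div_add_cast_div_eq_one_add_inv_mul hrp
    (by omega) (by omega) hirp (by omega) (by omega) hipr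
  linear_combination hpq' + hqr' + hrp'

/-- For pairwise coprime `p, q, r > 1`, with inverses in `{1,...,modulus-1}`,
`(q⁻¹(p)+r⁻¹(p))/p + (r⁻¹(q)+p⁻¹(q))/q + (p⁻¹(r)+q⁻¹(r))/r = 3 + 1/(qr) + 1/(rp) + 1/(pq)`. -/
theorem stmt2 (p q r : ℕ) (hp : 1 < p) (hq : 1 < q) (hr : 1 < r)
    (hpq : Nat.Coprime p q) (hqr : Nat.Coprime q r) (hrp : Nat.Coprime r p)
    (iqp irp irq ipq ipr iqr : ℕ)
    (hiqp : 1 ≤ iqp ∧ iqp ≤ p - 1 ∧ q * iqp ≡ 1 [MOD p])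
    (hirp : 1 ≤ irp ∧ irp ≤ p - 1 ∧ r * irp ≡ 1 [MOD p])
    (hirq : 1 ≤ irq ∧ irq ≤ q - 1 ∧ r * irq ≡ 1 [MOD q])
    (hipq : 1 ≤ ipq ∧ ipq ≤ q - 1 ∧ p * ipq ≡ 1 [MOD q])
    (hipr : 1 ≤ ipr ∧ ipr ≤ r - 1 ∧ p * ipr ≡ 1 [MOD r])
    (hiqr : 1 ≤ iqr ∧ iqr ≤ r - 1 ∧ q * iqr ≡ 1 [MOD r]) :
    ((iqp : ℚ) + irp) / p + ((irq : ℚ) + ipq) / q + ((ipr : ℚ) + iqr) / r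
      = 3 + 1 / (q * r) + 1 / (r * p) + 1 / (p * q) :=
  stmt2_general p q r hpq hqr hrp iqp irp irq ipq ipr iqr hiqp hirp hirq hipq hipr hiqr
end

section
/- Let p, q, r be pairwise coprime positive integers and for an integer k let F_k be the unique integer such that k + F_k·pqr = a·qr + b·rp + c·pq with 0 ≤ a < p, 0 ≤ b < q, 0 ≤ c < r. If -(qr + rp + pq) < k < pqr, then F_k ∈ {0, 1, 2}. -/
/-! The weighted digit sum `a·qr + b·rp + c·pq` lies in `[0, 3pqr - (qr + rp + pq)]`, so under the
bounds on `k` the multiple `F·pqr` of `pqr` lies strictly between `-pqr` and `3pqr`. -/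

lemma Int.eq_zero_or_one_or_two_of_neg_lt_mul_of_mul_lt_three_mul {F N : ℤ} (hN : 0 < N)
    (hlo : -N < F * N) (hhi : F * N < 3 * N) : F = 0 ∨ F = 1 ∨ F = 2 := by
  have hF_gt : -1 < F := lt_of_mul_lt_mul_right (by linarith) hN.le
  have hF_lt : F < 3 := lt_of_mul_lt_mul_right hhi hN.le
  omega

lemma Int.mul_le_pred_mul_of_lt {a p w : ℤ} (ha : a < p) (hw : 0 ≤ w) : a * w ≤ (p - 1) * w :=
  mul_le_mul_of_nonneg_right (by omega) hw

theorem stmt4_general (p q r : ℤ) (hp : 0 < p) (hq : 0 < q) (hr : 0 < r)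
    (k F a b c : ℤ)
    (ha : 0 ≤ a ∧ a < p) (hb : 0 ≤ b ∧ b < q) (hc : 0 ≤ c ∧ c < r)
    (heq : k + F * (p * q * r) = a * (q * r) + b * (r * p) + c * (p * q))
    (hk1 : -(q * r + r * p + p * q) < k) (hk2 : k < p * q * r) :
    F = 0 ∨ F = 1 ∨ F = 2 := by
  obtain ⟨ha0, ha1⟩ := ha
  obtain ⟨hb0, hb1⟩ := hb
  obtain ⟨hc0, hc1⟩ := hc
  have hsum_nonneg : 0 ≤ a * (q * r) + b * (r * p) + c * (p * q) := by positivity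
  have hsum_le : a * (q * r) + b * (r * p) + c * (p * q)
      ≤ (p - 1) * (q * r) + (q - 1) * (r * p) + (r - 1) * (p * q) :=
    add_le_add (add_le_add (Int.mul_le_pred_mul_of_lt ha1 (by positivity))
      (Int.mul_le_pred_mul_of_lt hb1 (by positivity))) (Int.mul_le_pred_mul_of_lt hc1 (by positivity))
  exact Int.eq_zero_or_one_or_two_of_neg_lt_mul_of_mul_lt_three_mul (N := p * q * r)
    (by positivity) (by linarith) (by linarith)

/-- If `k + F·pqr = a·qr + b·rp + c·pq` with `0 ≤ a < p`, `0 ≤ b < q`, `0 ≤ c < r`,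
and `-(qr+rp+pq) < k < pqr`, then `F ∈ {0,1,2}`. -/
theorem stmt4 (p q r : ℤ) (hp : 0 < p) (hq : 0 < q) (hr : 0 < r)
    (hpq : IsCoprime p q) (hqr : IsCoprime q r) (hrp : IsCoprime r p)
    (k F a b c : ℤ)
    (ha : 0 ≤ a ∧ a < p) (hb : 0 ≤ b ∧ b < q) (hc : 0 ≤ c ∧ c < r)
    (heq : k + F * (p * q * r) = a * (q * r) + b * (r * p) + c * (p * q))
    (hk1 : -(q * r + r * p + p * q) < k) (hk2 : k < p * q * r) :
    F = 0 ∨ F = 1 ∨ F = 2 :=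
  stmt4_general p q r hp hq hr k F a b c ha hb hc heq hk1 hk2
end

section
/- Let p, q, r be pairwise coprime positive integers and F_k as defined by the unique representation k + F_k·pqr = a_k·qr + b_k·rp + c_k·pq. Then for every integer k, F_k - F_{k-p} - F_{k-q} - F_{k-r} + F_{k-q-r} + F_{k-r-p} + F_{k-p-q} - F_{k-p-q-r} = 0. -/
/-!
Modulo `p` the representation of `k` reads `a_k·qr ≡ k`; as `qr` is invertible modulo `p` and
`0 ≤ a_k < p`, the digit `a_k` depends only on `k mod p`, and likewise `b_k` on `k mod q`, `c_k`
on `k mod r`. In the alternating sum of the eight representations the digits therefore cancel in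
pairs, as do the `k`'s, leaving `pqr` times the alternating sum of the `F`'s.
-/

theorem Int.eq_of_dvd_sub_mul_of_isCoprime {p m a a' : ℤ} (hpm : IsCoprime p m)
    (ha : 0 ≤ a) (hap : a < p) (ha' : 0 ≤ a') (ha'p : a' < p) (h : p ∣ (a - a') * m) :
    a = a' :=
  sub_eq_zero.mp <| Int.eq_zero_of_abs_lt_dvd (hpm.dvd_of_dvd_mul_right h)
    (abs_sub_lt_of_nonneg_of_lt ha hap ha' ha'p)

theorem digit_eq_of_dvd_sub {p q r : ℤ} {F a b c : ℤ → ℤ} (hcop : IsCoprime p (q * r))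
    (ha : ∀ k, 0 ≤ a k) (hap : ∀ k, a k < p)
    (hrep : ∀ k, k + F k * (p * q * r) = a k * (q * r) + b k * (r * p) + c k * (p * q))
    {k k' : ℤ} (hk : p ∣ k - k') : a k = a k' := by
  refine Int.eq_of_dvd_sub_mul_of_isCoprime hcop (ha k) (hap k) (ha k') (hap k') ?_
  obtain ⟨n, hn⟩ := hk
  exact ⟨n + (F k - F k') * (q * r) - (b k - b k') * r - (c k - c k') * q, by
    linear_combination hrep k' - hrep k + hn⟩

/-- If `F : ℤ → ℤ` satisfies, for every `k`, `k + F k · pqr = a·qr + b·rp + c·pq` for some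
`0 ≤ a < p`, `0 ≤ b < q`, `0 ≤ c < r`, then
`F k - F (k-p) - F (k-q) - F (k-r) + F (k-q-r) + F (k-r-p) + F (k-p-q) - F (k-p-q-r) = 0`. -/
theorem stmt5 (p q r : ℤ) (hp : 0 < p) (hq : 0 < q) (hr : 0 < r)
    (hpq : IsCoprime p q) (hqr : IsCoprime q r) (hrp : IsCoprime r p)
    (F : ℤ → ℤ)
    (hF : ∀ k : ℤ, ∃ a b c : ℤ, 0 ≤ a ∧ a < p ∧ 0 ≤ b ∧ b < q ∧ 0 ≤ c ∧ c < r ∧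
      k + F k * (p * q * r) = a * (q * r) + b * (r * p) + c * (p * q)) :
    ∀ k : ℤ, F k - F (k - p) - F (k - q) - F (k - r)
      + F (k - q - r) + F (k - r - p) + F (k - p - q) - F (k - p - q - r) = 0 := by
  choose a b c ha hap hb hbq hc hcr hrep using hF
  have hA : ∀ k k', p ∣ k - k' → a k = a k' := fun _ _ =>
    digit_eq_of_dvd_sub (hpq.mul_right hrp.symm) ha hap hrep
  have hB : ∀ k k', q ∣ k - k' → b k = b k' := fun _ _ =>
    digit_eq_of_dvd_sub (F := F) (r := p) (b := c) (c := a) (hqr.mul_right hpq.symm) hb hbq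
      fun k => by linear_combination hrep k
  have hC : ∀ k k', r ∣ k - k' → c k = c k' := fun _ _ =>
    digit_eq_of_dvd_sub (F := F) (q := p) (r := q) (b := a) (c := b) (hrp.mul_right hqr.symm)
      hc hcr
      fun k => by linear_combination hrep k
  intro k
  refine mul_right_cancel₀ (by positivity : p * q * r ≠ 0) ?_
  linear_combination hrep k - hrep (k - p) - hrep (k - q) - hrep (k - r)
      + hrep (k - q - r) + hrep (k - r - p) + hrep (k - p - q) - hrep (k - p - q - r)
    + q * r * (hA k (k - p) ⟨1, by ring⟩ - hA (k - q) (k - p - q) ⟨1, by ring⟩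
      - hA (k - r) (k - r - p) ⟨1, by ring⟩ + hA (k - q - r) (k - p - q - r) ⟨1, by ring⟩)
    + r * p * (hB k (k - q) ⟨1, by ring⟩ - hB (k - p) (k - p - q) ⟨1, by ring⟩
      - hB (k - r) (k - q - r) ⟨1, by ring⟩ + hB (k - r - p) (k - p - q - r) ⟨1, by ring⟩)
    + p * q * (hC k (k - r) ⟨1, by ring⟩ - hC (k - p) (k - r - p) ⟨1, by ring⟩
      - hC (k - q) (k - q - r) ⟨1, by ring⟩ + hC (k - p - q) (k - p - q - r) ⟨1, by ring⟩)
end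

section
/- Let p, q, r be pairwise coprime positive integers greater than 1, with F_k, a_k, c_k defined by the unique representation k + F_k·pqr = a_k·qr + b_k·rp + c_k·pq (0 ≤ a_k < p, 0 ≤ b_k < q, 0 ≤ c_k < r). Then F_k - F_{k-q} = -1 if a_k < r⁻¹(p) and c_k < p⁻¹(r); F_k - F_{k-q} = 1 if a_k ≥ r⁻¹(p) and c_k ≥ p⁻¹(r); and F_k - F_{k-q} = 0 otherwise. Here r⁻¹(p) ∈ {1,...,p-1} is the inverse of r mod p and p⁻¹(r) ∈ {1,...,r-1} is the inverse of p mod r. -/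
/-!
Subtracting the representations of `k - q` and `k` gives
`q + D·pqr = A·qr + B·rp + C·pq`, where `D`, `A`, `B`, `C` are the differences of `F`, `a`, `b`, `c`.
Reducing mod `q` kills `B` (it is a multiple of `q` of absolute value `< q`), and dividing by `q`
leaves `1 + D·pr = A·r + C·p`. Modulo `p` this says `A ≡ r⁻¹(p)`, so `A = r⁻¹(p)` or `r⁻¹(p) - p`
according as `a_k ≥ r⁻¹(p)` or not; likewise `C = p⁻¹(r)` or `p⁻¹(r) - r`. Since
`r⁻¹(p)·r + p⁻¹(r)·p = 1 + pr`, this yields `D = 1 - [a_k < r⁻¹(p)] - [c_k < p⁻¹(r)]`.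
-/

namespace Int

lemma sub_eq_sub_mul_ite_of_sub_modEq {n x y s : ℤ} (hx : 0 ≤ x) (hxn : x < n) (hy : 0 ≤ y)
    (hyn : y < n) (hs : 0 ≤ s) (hsn : s ≤ n) (h : x - y ≡ s [ZMOD n]) :
    x - y = s - n * if x < s then 1 else 0 := by
  have hdvd : n ∣ x - y - s := h.symm.dvd
  split_ifs with hxs
  · have := eq_zero_of_abs_lt_dvd (dvd_add hdvd (dvd_refl n))
      (abs_lt.mpr ⟨by omega, by omega⟩)
    omega
  · have := eq_zero_of_abs_lt_dvd hdvd (abs_lt.mpr ⟨by omega, by omega⟩)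
    omega

lemma modEq_of_mul_modEq_one {n x y r : ℤ} (hx : x * r ≡ 1 [ZMOD n])
    (hy : r * y ≡ 1 [ZMOD n]) : x ≡ y [ZMOD n] :=
  calc x = x * 1 := (mul_one x).symm
    _ ≡ x * (r * y) [ZMOD n] := hy.symm.mul_left x
    _ = x * r * y := (mul_assoc x r y).symm
    _ ≡ 1 * y [ZMOD n] := hx.mul_right y
    _ = y := one_mul y

lemma inv_mul_add_inv_mul_eq {p r irp ipr : ℤ} (hrp : IsCoprime r p)
    (hirp : 1 ≤ irp ∧ irp ≤ p - 1 ∧ r * irp ≡ 1 [ZMOD p])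
    (hipr : 1 ≤ ipr ∧ ipr ≤ r - 1 ∧ p * ipr ≡ 1 [ZMOD r]) :
    irp * r + ipr * p = 1 + p * r := by
  obtain ⟨hirp1, hirpp, hirpinv⟩ := hirp
  obtain ⟨hipr1, hiprr, hiprinv⟩ := hipr
  have hdvdp : p ∣ irp * r + ipr * p - (1 + p * r) := by
    obtain ⟨t, ht⟩ := hirpinv.dvd
    exact ⟨ipr - r - t, by linear_combination -ht⟩
  have hdvdr : r ∣ irp * r + ipr * p - (1 + p * r) := by
    obtain ⟨t, ht⟩ := hiprinv.dvd
    exact ⟨irp - p - t, by linear_combination -ht⟩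
  have hlow : -(p * r) < irp * r + ipr * p - (1 + p * r) := by nlinarith
  have hhigh : irp * r + ipr * p - (1 + p * r) < p * r := by nlinarith
  linarith [eq_zero_of_abs_lt_dvd (hrp.symm.mul_dvd hdvdp hdvdr) (abs_lt.mpr ⟨hlow, hhigh⟩)]

end Int

section Representation

variable {p q r : ℤ} {F a b c : ℤ → ℤ}

lemma one_add_sub_mul_eq_of_rep (hpq : IsCoprime p q) (hqr : IsCoprime q r)
    (hrep : ∀ k : ℤ, 0 ≤ a k ∧ a k < p ∧ 0 ≤ b k ∧ b k < q ∧ 0 ≤ c k ∧ c k < r ∧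
      k + F k * (p * q * r) = a k * (q * r) + b k * (r * p) + c k * (p * q)) (k : ℤ) :
    1 + (F k - F (k - q)) * (p * r) = (a k - a (k - q)) * r + (c k - c (k - q)) * p := by
  obtain ⟨-, -, hb, hbq, -, -, hk⟩ := hrep k
  obtain ⟨-, -, hb', hbq', -, -, hk'⟩ := hrep (k - q)
  have hdiff : q * (1 + (F k - F (k - q)) * (p * r) - (a k - a (k - q)) * r
      - (c k - c (k - q)) * p) = (b k - b (k - q)) * (r * p) := by
    linear_combination hk - hk'
  have hbeq : b k - b (k - q) = 0 :=
    Int.eq_zero_of_abs_lt_dvd ((hqr.mul_right hpq.symm).dvd_of_dvd_mul_right ⟨_, hdiff.symm⟩)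
      (abs_lt.mpr ⟨by omega, by omega⟩)
  have hq : q ≠ 0 := by omega
  rw [hbeq, zero_mul, mul_eq_zero_iff_left hq, sub_sub, sub_eq_zero] at hdiff
  linear_combination hdiff

theorem F_sub_F_sub_eq (hpq : IsCoprime p q) (hqr : IsCoprime q r) (hrp : IsCoprime r p)
    (hrep : ∀ k : ℤ, 0 ≤ a k ∧ a k < p ∧ 0 ≤ b k ∧ b k < q ∧ 0 ≤ c k ∧ c k < r ∧
      k + F k * (p * q * r) = a k * (q * r) + b k * (r * p) + c k * (p * q))
    {irp ipr : ℤ} (hirp : 1 ≤ irp ∧ irp ≤ p - 1 ∧ r * irp ≡ 1 [ZMOD p])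
    (hipr : 1 ≤ ipr ∧ ipr ≤ r - 1 ∧ p * ipr ≡ 1 [ZMOD r]) (k : ℤ) :
    F k - F (k - q) = 1 - (if a k < irp then 1 else 0) - (if c k < ipr then 1 else 0) := by
  have hmain := one_add_sub_mul_eq_of_rep hpq hqr hrep k
  obtain ⟨ha, hap, -, -, hc, hcr, -⟩ := hrep k
  obtain ⟨ha', hap', -, -, hc', hcr', -⟩ := hrep (k - q)
  have hAmod : (a k - a (k - q)) * r ≡ 1 [ZMOD p] :=
    Int.modEq_iff_dvd.mpr ⟨c k - c (k - q) - (F k - F (k - q)) * r, by linear_combination hmain⟩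
  have hCmod : (c k - c (k - q)) * p ≡ 1 [ZMOD r] :=
    Int.modEq_iff_dvd.mpr ⟨a k - a (k - q) - (F k - F (k - q)) * p, by linear_combination hmain⟩
  have hA := Int.sub_eq_sub_mul_ite_of_sub_modEq ha hap ha' hap' (by omega) (by omega)
    (Int.modEq_of_mul_modEq_one hAmod hirp.2.2)
  have hC := Int.sub_eq_sub_mul_ite_of_sub_modEq hc hcr hc' hcr' (by omega) (by omega)
    (Int.modEq_of_mul_modEq_one hCmod hipr.2.2)
  have hbezout := Int.inv_mul_add_inv_mul_eq hrp hirp hipr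
  have hpr : p * r ≠ 0 := mul_ne_zero (by omega) (by omega)
  refine mul_right_cancel₀ hpr ?_
  linear_combination hmain + r * hA + p * hC + hbezout

end Representation

theorem stmt6_general (p q r : ℤ)
    (hpq : IsCoprime p q) (hqr : IsCoprime q r) (hrp : IsCoprime r p)
    (F a b c : ℤ → ℤ)
    (hrep : ∀ k : ℤ, 0 ≤ a k ∧ a k < p ∧ 0 ≤ b k ∧ b k < q ∧ 0 ≤ c k ∧ c k < r ∧
      k + F k * (p * q * r) = a k * (q * r) + b k * (r * p) + c k * (p * q))
    (irp ipr : ℤ)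
    (hirp : 1 ≤ irp ∧ irp ≤ p - 1 ∧ r * irp ≡ 1 [ZMOD p])
    (hipr : 1 ≤ ipr ∧ ipr ≤ r - 1 ∧ p * ipr ≡ 1 [ZMOD r]) :
    ∀ k : ℤ,
      (a k < irp ∧ c k < ipr → F k - F (k - q) = -1) ∧
      (irp ≤ a k ∧ ipr ≤ c k → F k - F (k - q) = 1) ∧
      (¬(a k < irp ∧ c k < ipr) ∧ ¬(irp ≤ a k ∧ ipr ≤ c k) → F k - F (k - q) = 0) := by
  intro k
  rw [F_sub_F_sub_eq hpq hqr hrp hrep hirp hipr k]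
  split_ifs <;> omega

/-- With `(F k, a k, b k, c k)` the unique representation
`k + F k · pqr = a k · qr + b k · rp + c k · pq` (`0 ≤ a k < p` etc.), and
`irp`, `ipr` the inverses of `r` mod `p` and of `p` mod `r` in `{1,...,modulus-1}`:
`F k - F (k-q)` is `-1` if `a k < irp` and `c k < ipr`; `1` if `a k ≥ irp` and `c k ≥ ipr`;
and `0` otherwise. -/
theorem stmt6 (p q r : ℤ) (hp : 1 < p) (hq : 1 < q) (hr : 1 < r)
    (hpq : IsCoprime p q) (hqr : IsCoprime q r) (hrp : IsCoprime r p)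
    (F a b c : ℤ → ℤ)
    (hrep : ∀ k : ℤ, 0 ≤ a k ∧ a k < p ∧ 0 ≤ b k ∧ b k < q ∧ 0 ≤ c k ∧ c k < r ∧
      k + F k * (p * q * r) = a k * (q * r) + b k * (r * p) + c k * (p * q))
    (irp ipr : ℤ)
    (hirp : 1 ≤ irp ∧ irp ≤ p - 1 ∧ r * irp ≡ 1 [ZMOD p])
    (hipr : 1 ≤ ipr ∧ ipr ≤ r - 1 ∧ p * ipr ≡ 1 [ZMOD r]) :
    ∀ k : ℤ,
      (a k < irp ∧ c k < ipr → F k - F (k - q) = -1) ∧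
      (irp ≤ a k ∧ ipr ≤ c k → F k - F (k - q) = 1) ∧
      (¬(a k < irp ∧ c k < ipr) ∧ ¬(irp ≤ a k ∧ ipr ≤ c k) → F k - F (k - q) = 0) :=
  stmt6_general p q r hpq hqr hrp F a b c hrep irp ipr hirp hipr
end

section
/- Let p, q, r be distinct odd primes. Define α_p = min{q⁻¹(p), r⁻¹(p), p - q⁻¹(p), p - r⁻¹(p)} and similarly α_q, α_r (with inverses taken in {1,...,modulus-1}). Then α_p·α_q·(r - 2α_r) + α_q·α_r·(p - 2α_p) + α_r·α_p·(q - 2α_q) ≥ (p-1)/2 + (q-1)/2 + (r-1)/2. -/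
/-!
Write `a, b, c` for `α_p, α_q, α_r`; then `1 ≤ a` and `2a ≤ p - 1` as `p` is odd, etc.
In `ab (r - 2c) - (r - 1)/2 = (ab - 1/2)(r - 1 - 2c) + (ab - c)` the first summand is
nonnegative, and the second ones add up to `a (b - 1) + b (c - 1) + c (a - 1) ≥ 0`.
-/

section

variable {K : Type*} [Field K] [LinearOrder K] [IsStrictOrderedRing K]

theorem half_sub_one_le_mul_sub_two_mul {a b c r : K} (ha : 1 ≤ a) (hb : 1 ≤ b)
    (hc : 2 * c ≤ r - 1) :
    (r - 1) / 2 + (a * b - c) ≤ a * b * (r - 2 * c) := by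
  have hab : 1 / 2 ≤ a * b - 1 / 2 := by nlinarith
  have key : 0 ≤ (a * b - 1 / 2) * (r - 1 - 2 * c) := mul_nonneg (by linarith) (by linarith)
  linear_combination key

theorem cyclic_sum_half_sub_one_le {a b c p q r : K} (ha : 1 ≤ a) (hb : 1 ≤ b) (hc : 1 ≤ c)
    (hap : 2 * a ≤ p - 1) (hbq : 2 * b ≤ q - 1) (hcr : 2 * c ≤ r - 1) :
    (p - 1) / 2 + (q - 1) / 2 + (r - 1) / 2 ≤
      a * b * (r - 2 * c) + b * c * (p - 2 * a) + c * a * (q - 2 * b) := by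
  have hr := half_sub_one_le_mul_sub_two_mul ha hb hcr
  have hp := half_sub_one_le_mul_sub_two_mul hb hc hap
  have hq := half_sub_one_le_mul_sub_two_mul hc ha hbq
  have h₁ : 0 ≤ a * (b - 1) := mul_nonneg (by linarith) (by linarith)
  have h₂ : 0 ≤ b * (c - 1) := mul_nonneg (by linarith) (by linarith)
  have h₃ : 0 ≤ c * (a - 1) := mul_nonneg (by linarith) (by linarith)
  linear_combination hr + hp + hq + h₁ + h₂ + h₃

end

theorem Int.one_le_min_min_sub {m i j : ℤ} (hi : 1 ≤ i ∧ i ≤ m - 1) (hj : 1 ≤ j ∧ j ≤ m - 1) :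
    1 ≤ min (min i j) (min (m - i) (m - j)) := by
  simp only [le_min_iff]
  omega

theorem Int.two_mul_min_min_sub_le {m : ℤ} (hm : Odd m) (i j : ℤ) :
    2 * min (min i j) (min (m - i) (m - j)) ≤ m - 1 := by
  have hi : min (min i j) (min (m - i) (m - j)) ≤ i := (min_le_left _ _).trans (min_le_left _ _)
  have hmi : min (min i j) (min (m - i) (m - j)) ≤ m - i :=
    (min_le_right _ _).trans (min_le_left _ _)
  obtain ⟨k, rfl⟩ := hm
  omega

theorem stmt8_general (p q r : ℤ)
    (hpo : Odd p) (hqo : Odd q) (hro : Odd r)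
    (iqp irp irq ipq ipr iqr : ℤ)
    (hiqp : 1 ≤ iqp ∧ iqp ≤ p - 1 ∧ q * iqp ≡ 1 [ZMOD p])
    (hirp : 1 ≤ irp ∧ irp ≤ p - 1 ∧ r * irp ≡ 1 [ZMOD p])
    (hirq : 1 ≤ irq ∧ irq ≤ q - 1 ∧ r * irq ≡ 1 [ZMOD q])
    (hipq : 1 ≤ ipq ∧ ipq ≤ q - 1 ∧ p * ipq ≡ 1 [ZMOD q])
    (hipr : 1 ≤ ipr ∧ ipr ≤ r - 1 ∧ p * ipr ≡ 1 [ZMOD r])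
    (hiqr : 1 ≤ iqr ∧ iqr ≤ r - 1 ∧ q * iqr ≡ 1 [ZMOD r]) :
    let αp := min (min iqp irp) (min (p - iqp) (p - irp))
    let αq := min (min irq ipq) (min (q - irq) (q - ipq))
    let αr := min (min ipr iqr) (min (r - ipr) (r - iqr))
    ((αp * αq * (r - 2 * αr) + αq * αr * (p - 2 * αp) + αr * αp * (q - 2 * αq) : ℤ) : ℚ)
      ≥ ((p : ℚ) - 1) / 2 + ((q : ℚ) - 1) / 2 + ((r : ℚ) - 1) / 2 := by
  intro αp αq αr
  have hαp : 1 ≤ αp := Int.one_le_min_min_sub ⟨hiqp.1, hiqp.2.1⟩ ⟨hirp.1, hirp.2.1⟩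
  have hαq : 1 ≤ αq := Int.one_le_min_min_sub ⟨hirq.1, hirq.2.1⟩ ⟨hipq.1, hipq.2.1⟩
  have hαr : 1 ≤ αr := Int.one_le_min_min_sub ⟨hipr.1, hipr.2.1⟩ ⟨hiqr.1, hiqr.2.1⟩
  push_cast
  apply cyclic_sum_half_sub_one_le (K := ℚ) <;> norm_cast
  exacts [Int.two_mul_min_min_sub_le hpo _ _, Int.two_mul_min_min_sub_le hqo _ _,
    Int.two_mul_min_min_sub_le hro _ _]

/-- For distinct odd primes `p, q, r`, with `α_p = min{q⁻¹(p), r⁻¹(p), p-q⁻¹(p), p-r⁻¹(p)}`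
and similarly `α_q, α_r`, we have
`α_p α_q (r-2α_r) + α_q α_r (p-2α_p) + α_r α_p (q-2α_q) ≥ (p-1)/2 + (q-1)/2 + (r-1)/2`. -/
theorem stmt8 (p q r : ℤ) (hp : Prime p) (hq : Prime q) (hr : Prime r)
    (hpo : Odd p) (hqo : Odd q) (hro : Odd r)
    (hpq : p ≠ q) (hqr : q ≠ r) (hrp : r ≠ p)
    (iqp irp irq ipq ipr iqr : ℤ)
    (hiqp : 1 ≤ iqp ∧ iqp ≤ p - 1 ∧ q * iqp ≡ 1 [ZMOD p])
    (hirp : 1 ≤ irp ∧ irp ≤ p - 1 ∧ r * irp ≡ 1 [ZMOD p])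
    (hirq : 1 ≤ irq ∧ irq ≤ q - 1 ∧ r * irq ≡ 1 [ZMOD q])
    (hipq : 1 ≤ ipq ∧ ipq ≤ q - 1 ∧ p * ipq ≡ 1 [ZMOD q])
    (hipr : 1 ≤ ipr ∧ ipr ≤ r - 1 ∧ p * ipr ≡ 1 [ZMOD r])
    (hiqr : 1 ≤ iqr ∧ iqr ≤ r - 1 ∧ q * iqr ≡ 1 [ZMOD r]) :
    let αp := min (min iqp irp) (min (p - iqp) (p - irp))
    let αq := min (min irq ipq) (min (q - irq) (q - ipq))
    let αr := min (min ipr iqr) (min (r - ipr) (r - iqr))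
    ((αp * αq * (r - 2 * αr) + αq * αr * (p - 2 * αp) + αr * αp * (q - 2 * αq) : ℤ) : ℚ)
      ≥ ((p : ℚ) - 1) / 2 + ((q : ℚ) - 1) / 2 + ((r : ℚ) - 1) / 2 :=
  stmt8_general p q r hpo hqo hro iqp irp irq ipq ipr iqr hiqp hirp hirq hipq hipr hiqr
end

section
/- Let p, q, r be distinct odd primes with α_p, α_q, α_r as defined (α_m = min of the two inverses and their complements mod m). Then α_p·α_q·(r - 2α_r) ≥ α_q + (r - 2α_r) - 1 + α_p - 1, and consequently Σ_cyc α_p·α_q·(r - 2α_r) > (pqr)^{1/3}. -/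
lemma aux10 (a b c : ℤ) (ha : 1 ≤ a) (hb : 1 ≤ b) (hc : 1 ≤ c) :
    a + b + c - 2 ≤ a * b * c := by
  nlinarith [mul_nonneg (mul_nonneg (by linarith : (0:ℤ) ≤ a - 1) (by linarith : (0:ℤ) ≤ b - 1)) (by linarith : (0:ℤ) ≤ c - 1),
    mul_nonneg (by linarith : (0:ℤ) ≤ a - 1) (by linarith : (0:ℤ) ≤ b - 1),
    mul_nonneg (by linarith : (0:ℤ) ≤ a - 1) (by linarith : (0:ℤ) ≤ c - 1),
    mul_nonneg (by linarith : (0:ℤ) ≤ b - 1) (by linarith : (0:ℤ) ≤ c - 1)]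

set_option maxHeartbeats 1000000 in
/-- For distinct odd primes `p, q, r` with `α`'s as usual:
`α_p α_q (r-2α_r) ≥ α_q + (r-2α_r) - 1 + α_p - 1`, and the cyclic sum
`Σ_cyc α_p α_q (r-2α_r) > (pqr)^(1/3)`. -/
theorem stmt10 (p q r : ℤ) (hp : Prime p) (hq : Prime q) (hr : Prime r)
    (hpo : Odd p) (hqo : Odd q) (hro : Odd r)
    (hpq : p ≠ q) (hqr : q ≠ r) (hrp : r ≠ p)
    (iqp irp irq ipq ipr iqr : ℤ)
    (hiqp : 1 ≤ iqp ∧ iqp ≤ p - 1 ∧ q * iqp ≡ 1 [ZMOD p])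
    (hirp : 1 ≤ irp ∧ irp ≤ p - 1 ∧ r * irp ≡ 1 [ZMOD p])
    (hirq : 1 ≤ irq ∧ irq ≤ q - 1 ∧ r * irq ≡ 1 [ZMOD q])
    (hipq : 1 ≤ ipq ∧ ipq ≤ q - 1 ∧ p * ipq ≡ 1 [ZMOD q])
    (hipr : 1 ≤ ipr ∧ ipr ≤ r - 1 ∧ p * ipr ≡ 1 [ZMOD r])
    (hiqr : 1 ≤ iqr ∧ iqr ≤ r - 1 ∧ q * iqr ≡ 1 [ZMOD r]) :
    let αp := min (min iqp irp) (min (p - iqp) (p - irp))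
    let αq := min (min irq ipq) (min (q - irq) (q - ipq))
    let αr := min (min ipr iqr) (min (r - ipr) (r - iqr))
    αp * αq * (r - 2 * αr) ≥ αq + (r - 2 * αr) - 1 + αp - 1 ∧
    ((αp * αq * (r - 2 * αr) + αq * αr * (p - 2 * αp) + αr * αp * (q - 2 * αq) : ℤ) : ℝ)
      > ((p : ℝ) * q * r) ^ ((1 : ℝ) / 3) := by
  intro αp αq αr
  obtain ⟨h1, h2, -⟩ := hiqp
  obtain ⟨h3, h4, -⟩ := hirp
  obtain ⟨h5, h6, -⟩ := hirq
  obtain ⟨h7, h8, -⟩ := hipq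
  obtain ⟨h9, h10, -⟩ := hipr
  obtain ⟨h11, h12, -⟩ := hiqr
  obtain ⟨a, ha⟩ := hpo
  obtain ⟨b, hb⟩ := hqo
  obtain ⟨c, hc⟩ := hro
  -- basic bounds on the alphas
  have hαp1 : 1 ≤ αp := le_min (le_min h1 h3) (le_min (by omega) (by omega))
  have hαq1 : 1 ≤ αq := le_min (le_min h5 h7) (le_min (by omega) (by omega))
  have hαr1 : 1 ≤ αr := le_min (le_min h9 h11) (le_min (by omega) (by omega))
  have hαp2 : αp ≤ iqp := le_trans (min_le_left _ _) (min_le_left _ _)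
  have hαp3 : αp ≤ p - iqp := le_trans (min_le_right _ _) (min_le_left _ _)
  have hαq2 : αq ≤ irq := le_trans (min_le_left _ _) (min_le_left _ _)
  have hαq3 : αq ≤ q - irq := le_trans (min_le_right _ _) (min_le_left _ _)
  have hαr2 : αr ≤ ipr := le_trans (min_le_left _ _) (min_le_left _ _)
  have hαr3 : αr ≤ r - ipr := le_trans (min_le_right _ _) (min_le_left _ _)
  have hpb : 2 * αp ≤ p - 1 := by omega
  have hqb : 2 * αq ≤ q - 1 := by omega
  have hrb : 2 * αr ≤ r - 1 := by omega
  clear_value αp αq αr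
  have key1 := aux10 αp αq (r - 2 * αr) hαp1 hαq1 (by omega)
  have key2 := aux10 αq αr (p - 2 * αp) hαq1 hαr1 (by omega)
  have key3 := aux10 αr αp (q - 2 * αq) hαr1 hαp1 (by omega)
  refine ⟨by linarith, ?_⟩
  -- the cyclic sum is at least p + q + r - 6
  set S : ℤ := αp * αq * (r - 2 * αr) + αq * αr * (p - 2 * αp) + αr * αp * (q - 2 * αq) with hS
  have hsum : p + q + r - 6 ≤ S := by
    linarith [key1, key2, key3]
  have hs15 : 15 ≤ p + q + r := by omega
  have hp3 : 3 ≤ p := by omega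
  have hq3 : 3 ≤ q := by omega
  have hr3 : 3 ≤ r := by omega
  have h27 : 27 * (p * q * r) ≤ (p + q + r) ^ 3 := by
    nlinarith [mul_nonneg (sq_nonneg (p - q)) (by linarith : (0:ℤ) ≤ r),
      mul_nonneg (sq_nonneg (q - r)) (by linarith : (0:ℤ) ≤ p),
      mul_nonneg (sq_nonneg (r - p)) (by linarith : (0:ℤ) ≤ q),
      mul_nonneg (sq_nonneg (p - q)) (by linarith : (0:ℤ) ≤ p + q + r),
      mul_nonneg (sq_nonneg (q - r)) (by linarith : (0:ℤ) ≤ p + q + r),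
      mul_nonneg (sq_nonneg (r - p)) (by linarith : (0:ℤ) ≤ p + q + r)]
  have hcube : p * q * r < (p + q + r - 6) ^ 3 := by
    nlinarith [h27, hs15, sq_nonneg (p + q + r - 15),
      mul_nonneg (sq_nonneg (p + q + r - 15)) (by linarith : (0:ℤ) ≤ p + q + r - 15)]
  have hS9 : 9 ≤ S := by linarith
  have hmono : (p + q + r - 6) ^ 3 ≤ S ^ 3 := pow_le_pow_left₀ (by linarith) hsum 3
  have hcube2 : p * q * r < S ^ 3 := by linarith
  -- move to the reals
  have hSposR : (0:ℝ) < (S : ℝ) := by exact_mod_cast (by linarith : (0:ℤ) < S)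
  have hpqrR : ((p:ℝ) * q * r) < (S:ℝ) ^ 3 := by
    have : ((p * q * r : ℤ) : ℝ) < ((S ^ 3 : ℤ) : ℝ) := by exact_mod_cast hcube2
    push_cast at this
    linarith
  have hpqrnn : (0:ℝ) ≤ (p:ℝ) * q * r := by positivity
  have hlt : ((p:ℝ) * q * r) ^ ((1:ℝ)/3) < ((S:ℝ) ^ 3) ^ ((1:ℝ)/3) :=
    Real.rpow_lt_rpow hpqrnn hpqrR (by norm_num)
  have heq : ((S:ℝ) ^ 3) ^ ((1:ℝ)/3) = (S:ℝ) := by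
    rw [← Real.rpow_natCast (S:ℝ) 3, ← Real.rpow_mul hSposR.le]
    norm_num
  rw [heq] at hlt
  exact hlt
end

section
/- Let p, q, r be pairwise coprime positive integers greater than 1. Then (1 - x^{pqr})(1 - x^p)(1 - x^q)(1 - x^r) is divisible by (1 - x^{qr})(1 - x^{rp})(1 - x^{pq})(1 - x) in the polynomial ring ℤ[x], i.e., the inclusion–exclusion polynomial Q_{{p,q,r}}(x) = (1-x^{pqr})(1-x^p)(1-x^q)(1-x^r) / ((1-x^{qr})(1-x^{rp})(1-x^{pq})(1-x)) has integer coefficients. -/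
/-!
Since `X ^ n - 1 = ∏_{d ∣ n} Φ_d`, one product of binomials `X ^ n - 1` divides another as soon
as the multiset of divisors of the exponents is contained in the other one. Writing `D(n)` for
the divisors of `n`, for `a, b, c` dividing `n` inclusion–exclusion gives
  `D(a) + D(b) + D(c) + D(gcd(a, b, c))`
  `  = (D(a) ∪ D(b) ∪ D(c)) + D(gcd(a, b)) + D(gcd(b, c)) + D(gcd(c, a))`,
and the union lies in `D(n)`. For `a = qr`, `b = rp`, `c = pq`, `n = pqr` coprimality makes the
pairwise gcds `r, p, q` and the triple gcd `1`.
-/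

open Polynomial

theorem Multiset.add_add_add_inter_inter_eq {α : Type*} [DecidableEq α] (s t u : Multiset α) :
    s + t + u + s ∩ t ∩ u = (s ∪ t ∪ u) + s ∩ t + t ∩ u + u ∩ s := by
  ext x
  simp only [Multiset.count_add, Multiset.count_inter, Multiset.count_union]
  omega

theorem Nat.divisors_gcd {m n : ℕ} (hm : m ≠ 0) (hn : n ≠ 0) :
    (m.gcd n).divisors = m.divisors ∩ n.divisors := by
  ext d
  simp [Nat.dvd_gcd_iff, hm, hn]

theorem Nat.divisors_val_add_le {a b c n : ℕ} (hn : n ≠ 0)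
    (ha : a ∣ n) (hb : b ∣ n) (hc : c ∣ n) :
    a.divisors.val + b.divisors.val + c.divisors.val + ((a.gcd b).gcd c).divisors.val ≤
      n.divisors.val + (a.gcd b).divisors.val + (b.gcd c).divisors.val + (c.gcd a).divisors.val := by
  have ha0 := ne_zero_of_dvd_ne_zero hn ha
  have hb0 := ne_zero_of_dvd_ne_zero hn hb
  have hc0 := ne_zero_of_dvd_ne_zero hn hc
  have hab0 : a.gcd b ≠ 0 := Nat.gcd_ne_zero_left ha0
  simp only [Nat.divisors_gcd ha0 hb0, Nat.divisors_gcd hab0 hc0, Nat.divisors_gcd hb0 hc0,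
    Nat.divisors_gcd hc0 ha0, Finset.inter_val, Multiset.add_add_add_inter_inter_eq]
  gcongr
  refine Multiset.union_le (Multiset.union_le ?_ ?_) ?_ <;>
    exact Finset.val_le_iff.mpr (Nat.divisors_subset_of_dvd hn ‹_›)

theorem Polynomial.prod_X_pow_sub_one_eq_prod_cyclotomic (R : Type*) [CommRing R]
    {s : Multiset ℕ} (hs : ∀ n ∈ s, n ≠ 0) :
    (s.map fun n => (X ^ n - 1 : R[X])).prod =
      ((s.bind fun n => n.divisors.val).map (cyclotomic · R)).prod := by
  rw [Multiset.map_bind, Multiset.prod_bind]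
  congr 1
  refine Multiset.map_congr rfl fun n hn => ?_
  rw [← prod_cyclotomic_eq_X_pow_sub_one (Nat.pos_of_ne_zero (hs n hn)),
    Finset.prod_eq_multiset_prod]

theorem Polynomial.prod_X_pow_sub_one_dvd_of_divisors_le (R : Type*) [CommRing R]
    {s t : Multiset ℕ} (hs : ∀ n ∈ s, n ≠ 0) (ht : ∀ n ∈ t, n ≠ 0)
    (h : s.bind (fun n => n.divisors.val) ≤ t.bind fun n => n.divisors.val) :
    (s.map fun n => (X ^ n - 1 : R[X])).prod ∣ (t.map fun n => (X ^ n - 1 : R[X])).prod := by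
  rw [prod_X_pow_sub_one_eq_prod_cyclotomic R hs, prod_X_pow_sub_one_eq_prod_cyclotomic R ht]
  exact Multiset.prod_dvd_prod_of_le (Multiset.map_le_map h)

theorem Polynomial.X_pow_sub_one_mul_gcd_dvd (R : Type*) [CommRing R] {a b c n : ℕ} (hn : n ≠ 0)
    (ha : a ∣ n) (hb : b ∣ n) (hc : c ∣ n) :
    ((X ^ a - 1) * (X ^ b - 1) * (X ^ c - 1) * (X ^ ((a.gcd b).gcd c) - 1) : R[X]) ∣
      (X ^ n - 1) * (X ^ a.gcd b - 1) * (X ^ b.gcd c - 1) * (X ^ c.gcd a - 1) := by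
  have ha0 := ne_zero_of_dvd_ne_zero hn ha
  have hb0 := ne_zero_of_dvd_ne_zero hn hb
  have hc0 := ne_zero_of_dvd_ne_zero hn hc
  have h := prod_X_pow_sub_one_dvd_of_divisors_le R
    (s := {a, b, c, (a.gcd b).gcd c}) (t := {n, a.gcd b, b.gcd c, c.gcd a})
    (by simp [ha0, hb0, hc0]) (by simp [hn, ha0, hb0, hc0])
    (by simpa [add_assoc] using Nat.divisors_val_add_le hn ha hb hc)
  simpa [mul_assoc] using h

theorem Nat.Coprime.gcd_mul_mul_eq {m n k : ℕ} (h : m.Coprime n) : (m * k).gcd (k * n) = k := by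
  rw [mul_comm m, Nat.gcd_mul_left, h, mul_one]

open Polynomial in
/-- For pairwise coprime `p, q, r > 1`, `(1-x^{qr})(1-x^{rp})(1-x^{pq})(1-x)` divides
`(1-x^{pqr})(1-x^p)(1-x^q)(1-x^r)` in `ℤ[x]`. -/
theorem stmt12 (p q r : ℕ) (hp : 1 < p) (hq : 1 < q) (hr : 1 < r)
    (hpq : Nat.Coprime p q) (hqr : Nat.Coprime q r) (hrp : Nat.Coprime r p) :
    ((1 - X ^ (q * r)) * (1 - X ^ (r * p)) * (1 - X ^ (p * q)) * (1 - X) : ℤ[X]) ∣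
      (1 - X ^ (p * q * r)) * (1 - X ^ p) * (1 - X ^ q) * (1 - X ^ r) := by
  have h := X_pow_sub_one_mul_gcd_dvd ℤ (a := q * r) (b := r * p) (c := p * q) (n := p * q * r)
    (by positivity) ⟨p, by ring⟩ ⟨q, by ring⟩ ⟨r, by ring⟩
  rw [hpq.symm.gcd_mul_mul_eq, hqr.symm.gcd_mul_mul_eq, hrp.symm.gcd_mul_mul_eq,
    (hrp.mul_right hqr.symm).gcd_eq_one, pow_one] at h
  have sign_flip : ∀ x y z w : ℤ[X], (1 - x) * (1 - y) * (1 - z) * (1 - w) =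
      (x - 1) * (y - 1) * (z - 1) * (w - 1) := fun _ _ _ _ => by ring
  rw [sign_flip, sign_flip]
  convert h using 1
  ring
end
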